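/- arXiv:1911.08166 — 3 statements merged into one kernel-verified Lean document; each statement's English description precedes it below -/
import Mathlib

section
/- Let α ∈ (0,1] and θ ∈ [−1/(2α), 1], and let ω_k (k ≥ 0) be the Maclaurin coefficients of the FBN-θ generating function. Then ω₀ = 2^{−α}(1+αθ)(3−2θ)^α, ω₁ = φ₀ω₀/ψ₀, ω₂ = [(φ₀−ψ₁)ω₁ + φ₁ω₀]/(2ψ₀), and for every k ≥ 3, ω_k = (1/(k·ψ₀)) · Σ_{j=1}^{3} [φ_{j−1} − (k−j)ψ_j] ω_{k−j}, where φ₀ = 2α(θ−1)(αθ+1) + αθ(θ−3/2), φ₁ = −α(2θ²−3αθ+4αθ²−1), φ₂ = −αθ(1/2−θ+α−2αθ), ψ₀ = (1/2)(3−2θ)(1+αθ), ψ₁ = −(αθ/2)(3−2θ) − 2(1−θ)(αθ+1), ψ₂ = −(1/2)(αθ+1)(2θ−1) − 2αθ(θ−1), ψ₃ = −(1/2)αθ(1−2θ). -/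
/-!
Write the generating function as `P · Q ^ α` with `P = 1 + αθ - αθ ξ` and `Q` the quadratic.
Where `Q` lies in the slit plane, `P Q ω' = (P' Q + α P Q') ω`; the polynomials `P Q` and
`P' Q + α P Q'` have coefficients `ψ₀, …, ψ₃` and `φ₀, φ₁, φ₂`. Since taking Maclaurin series is
multiplicative on smooth functions (Leibniz rule) and turns `d/dξ` into the formal derivative, this
ODE becomes an identity of power series, and comparing the coefficients of `ξ ^ (k - 1)` gives
`k ψ₀ ω_k + Σ_j (k - j) ψ_j ω_{k-j} = Σ_j φ_{j-1} ω_{k-j}`.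
-/

open Complex Polynomial Nat Filter Topology
open scoped PowerSeries

section Maclaurin

variable {𝕜 : Type*} [NontriviallyNormedField 𝕜]

theorem Polynomial.iteratedDeriv_eval (p : 𝕜[X]) (n : ℕ) :
    iteratedDeriv n (fun x => p.eval x) = fun x => (derivative^[n] p).eval x := by
  induction n with
  | zero => simp
  | succ n ih =>
    ext x
    rw [iteratedDeriv_succ, ih, Function.iterate_succ_apply', Polynomial.deriv]

theorem Polynomial.iteratedDeriv_eval_zero (p : 𝕜[X]) (n : ℕ) :
    iteratedDeriv n (fun x => p.eval x) 0 = n ! * p.coeff n := by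
  simp only [iteratedDeriv_eval, ← coeff_zero_eq_eval_zero, coeff_iterate_derivative, zero_add,
    descFactorial_self, nsmul_eq_mul]

noncomputable def maclaurinSeries (f : 𝕜 → 𝕜) : 𝕜⟦X⟧ :=
  PowerSeries.mk fun n => iteratedDeriv n f 0 / n !

@[simp]
theorem coeff_maclaurinSeries (f : 𝕜 → 𝕜) (n : ℕ) :
    PowerSeries.coeff n (maclaurinSeries f) = iteratedDeriv n f 0 / n ! :=
  PowerSeries.coeff_mk _ _

theorem maclaurinSeries_congr {f g : 𝕜 → 𝕜} (h : f =ᶠ[𝓝 0] g) :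
    maclaurinSeries f = maclaurinSeries g := by
  ext n
  simp [h.iteratedDeriv_eq n]

variable [CharZero 𝕜]

theorem maclaurinSeries_eval (p : 𝕜[X]) : maclaurinSeries (fun x => p.eval x) = p := by
  ext n
  simp [iteratedDeriv_eval_zero, factorial_ne_zero]

theorem maclaurinSeries_deriv (f : 𝕜 → 𝕜) :
    maclaurinSeries (deriv f) = d⁄dX 𝕜 (maclaurinSeries f) := by
  ext n
  rw [PowerSeries.coeff_derivative, coeff_maclaurinSeries, coeff_maclaurinSeries,
    ← iteratedDeriv_succ', factorial_succ]
  push_cast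
  field_simp

open scoped ContDiff in
theorem maclaurinSeries_mul {f g : 𝕜 → 𝕜} (hf : ContDiffAt 𝕜 ∞ f 0) (hg : ContDiffAt 𝕜 ∞ g 0) :
    maclaurinSeries (f * g) = maclaurinSeries f * maclaurinSeries g := by
  ext n
  simp only [coeff_maclaurinSeries, iteratedDeriv_mul (hf.of_le (by exact_mod_cast le_top))
    (hg.of_le (by exact_mod_cast le_top)), Finset.sum_div, PowerSeries.coeff_mul,
    Finset.Nat.sum_antidiagonal_eq_sum_range_succ_mk]
  refine Finset.sum_congr rfl fun i hi => ?_
  rw [Nat.cast_choose _ (by grind)]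
  field_simp [Nat.factorial_ne_zero]

open scoped ContDiff in
theorem maclaurinSeries_eval_mul (p : 𝕜[X]) {f : 𝕜 → 𝕜} (hf : ContDiffAt 𝕜 ∞ f 0) :
    maclaurinSeries (fun x => p.eval x * f x) = p * maclaurinSeries f := by
  rw [← maclaurinSeries_eval p]
  exact maclaurinSeries_mul (p.contDiff_aeval ∞).contDiffAt hf

theorem maclaurinSeries_ode [CompleteSpace 𝕜] {f : 𝕜 → 𝕜} (hf : AnalyticAt 𝕜 f 0) {A B : 𝕜[X]}
    (h : ∀ᶠ x in 𝓝 0, A.eval x * deriv f x = B.eval x * f x) :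
    A * d⁄dX 𝕜 (maclaurinSeries f) = B * maclaurinSeries f := by
  rw [← maclaurinSeries_deriv, ← maclaurinSeries_eval_mul A hf.deriv.contDiffAt,
    ← maclaurinSeries_eval_mul B hf.contDiffAt]
  exact maclaurinSeries_congr h

end Maclaurin

theorem eval_mul_deriv_eval_mul_cpow (P Q : ℂ[X]) (a : ℂ) {z : ℂ}
    (hz : Q.eval z ∈ slitPlane) :
    (P * Q).eval z * deriv (fun w => P.eval w * Q.eval w ^ a) z
      = (derivative P * Q + C a * P * derivative Q).eval z * (P.eval z * Q.eval z ^ a) := by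
  rw [((P.hasDerivAt z).fun_mul ((Q.hasDerivAt z).cpow_const hz)).deriv]
  have hpow : Q.eval z ^ a = Q.eval z ^ (a - 1) * Q.eval z := by
    rw [cpow_sub _ _ (slitPlane_ne_zero hz), cpow_one, div_mul_cancel₀ _ (slitPlane_ne_zero hz)]
  simp only [eval_add, eval_mul, eval_C]
  rw [hpow]
  ring

theorem maclaurinSeries_eval_mul_cpow_ode (P Q : ℂ[X]) (a : ℂ) (hQ : Q.eval 0 ∈ slitPlane) :
    ((P * Q : ℂ[X]) : ℂ⟦X⟧) * d⁄dX ℂ (maclaurinSeries fun z => P.eval z * Q.eval z ^ a)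
      = (derivative P * Q + C a * P * derivative Q : ℂ[X])
        * maclaurinSeries fun z => P.eval z * Q.eval z ^ a := by
  refine maclaurinSeries_ode ?_ ?_
  · exact (AnalyticOnNhd.eval_polynomial P 0 trivial).mul
      ((AnalyticOnNhd.eval_polynomial Q 0 trivial).cpow analyticAt_const hQ)
  · filter_upwards [Q.continuous.continuousAt.eventually_mem (isOpen_slitPlane.mem_nhds hQ)]
      with z hz using eval_mul_deriv_eval_mul_cpow P Q a hz

namespace PowerSeries

variable {R : Type*} [CommRing R]

theorem coeff_X_mul_derivative (S : R⟦X⟧) (n : ℕ) :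
    coeff n (X * d⁄dX R S) = n * coeff n S := by
  cases n with
  | zero => simp
  | succ n => rw [coeff_succ_X_mul, coeff_derivative, mul_comm]; push_cast; ring

theorem coeff_recurrence_of_cubic_ode {S : R⟦X⟧} {a₀ a₁ a₂ a₃ b₀ b₁ b₂ : R}
    (h : (C a₀ + C a₁ * X + C a₂ * X ^ 2 + C a₃ * X ^ 3) * d⁄dX R S
      = (C b₀ + C b₁ * X + C b₂ * X ^ 2) * S) :
    a₀ * coeff 1 S = b₀ * coeff 0 S ∧
    a₀ * (2 * coeff 2 S) + a₁ * coeff 1 S = b₀ * coeff 1 S + b₁ * coeff 0 S ∧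
    ∀ m : ℕ, a₀ * ((m + 3) * coeff (m + 3) S) + a₁ * ((m + 2) * coeff (m + 2) S)
      + a₂ * ((m + 1) * coeff (m + 1) S) + a₃ * (m * coeff m S)
      = b₀ * coeff (m + 2) S + b₁ * coeff (m + 1) S + b₂ * coeff m S := by
  -- After multiplying by `X`, every coefficient is read off `X * S'`, whose `n`-th coefficient is
  -- `n * coeff n S` for all `n`, so no case split at small indices is needed. The `X ^ 1` keeps
  -- `coeff_succ_X_mul` from firing before `coeff_X_pow_mul'`.
  have hX : C a₀ * (X * d⁄dX R S) + C a₁ * (X ^ 1 * (X * d⁄dX R S))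
      + C a₂ * (X ^ 2 * (X * d⁄dX R S)) + C a₃ * (X ^ 3 * (X * d⁄dX R S))
      = C b₀ * (X ^ 1 * S) + C b₁ * (X ^ 2 * S) + C b₂ * (X ^ 3 * S) := by
    linear_combination X * h
  have hcoeff (n : ℕ) := congrArg (coeff n) hX
  simp only [map_add, coeff_C_mul, coeff_X_pow_mul', coeff_X_mul_derivative] at hcoeff
  refine ⟨?_, ?_, fun m => ?_⟩
  · simpa using hcoeff 1
  · simpa using hcoeff 2
  · simpa using hcoeff (m + 3)

end PowerSeries

noncomputable def fbnGeneratingFunction (α θ : ℝ) (ξ : ℂ) : ℂ :=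
  ((1 : ℂ) + (α : ℂ) * (θ : ℂ) - (α : ℂ) * (θ : ℂ) * ξ) *
    (((3/2 : ℂ) - (θ : ℂ)) - ((2 : ℂ) - 2 * (θ : ℂ)) * ξ
      + ((1/2 : ℂ) - (θ : ℂ)) * ξ ^ 2) ^ (α : ℂ)

theorem fbnGeneratingFunction_zero {α θ : ℝ} (hθ : θ ≤ 3/2) :
    fbnGeneratingFunction α θ 0 = (2 ^ (-α) * (1 + α * θ) * (3 - 2 * θ) ^ α : ℝ) := by
  have hQ0 : (3/2 : ℂ) - θ = (((3 - 2 * θ) / 2 : ℝ) : ℂ) := by push_cast; ring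
  rw [fbnGeneratingFunction, mul_zero, sub_zero, mul_zero, sub_zero, zero_pow two_ne_zero,
    mul_zero, add_zero, hQ0, ← ofReal_cpow (by linarith), Real.div_rpow (by linarith) zero_le_two,
    Real.rpow_neg zero_le_two]
  push_cast
  ring

theorem maclaurinSeries_fbnGeneratingFunction_ode {α θ φ0 φ1 φ2 ψ0 ψ1 ψ2 ψ3 : ℝ} (hθ : θ < 3/2)
    (hφ0 : φ0 = 2*α*(θ - 1)*(α*θ + 1) + α*θ*(θ - 3/2))
    (hφ1 : φ1 = -α * (2*θ^2 - 3*α*θ + 4*α*θ^2 - 1))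
    (hφ2 : φ2 = -(α*θ) * (1/2 - θ + α - 2*α*θ))
    (hψ0 : ψ0 = (1/2) * (3 - 2*θ) * (1 + α*θ))
    (hψ1 : ψ1 = -(α*θ/2) * (3 - 2*θ) - 2*(1 - θ)*(α*θ + 1))
    (hψ2 : ψ2 = -(1/2) * (α*θ + 1) * (2*θ - 1) - 2*α*θ*(θ - 1))
    (hψ3 : ψ3 = -(1/2) * α * θ * (1 - 2*θ)) :
    (.C (ψ0 : ℂ) + .C (ψ1 : ℂ) * .X + .C (ψ2 : ℂ) * .X ^ 2 + .C (ψ3 : ℂ) * .X ^ 3)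
        * d⁄dX ℂ (maclaurinSeries (fbnGeneratingFunction α θ))
      = (.C (φ0 : ℂ) + .C (φ1 : ℂ) * .X + .C (φ2 : ℂ) * .X ^ 2)
        * maclaurinSeries (fbnGeneratingFunction α θ) := by
  set P : ℂ[X] := C (1 + α * θ : ℂ) - C (α * θ : ℂ) * X
  set Q : ℂ[X] := C (3/2 - θ : ℂ) - C (2 - 2 * θ : ℂ) * X + C (1/2 - θ : ℂ) * X ^ 2
  have hF : fbnGeneratingFunction α θ = fun z => P.eval z * Q.eval z ^ (α : ℂ) := by
    ext z
    simp [fbnGeneratingFunction, P, Q]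
  have hPQ : P * Q = C (ψ0 : ℂ) + C (ψ1 : ℂ) * X + C (ψ2 : ℂ) * X ^ 2 + C (ψ3 : ℂ) * X ^ 3 := by
    refine Polynomial.funext fun z => ?_
    simp only [P, Q, hψ0, hψ1, hψ2, hψ3, eval_add, eval_sub, eval_mul, eval_pow, eval_C, eval_X]
    push_cast
    ring
  have hB : derivative P * Q + C (α : ℂ) * P * derivative Q
      = C (φ0 : ℂ) + C (φ1 : ℂ) * X + C (φ2 : ℂ) * X ^ 2 := by
    refine Polynomial.funext fun z => ?_
    simp only [P, Q, hφ0, hφ1, hφ2, derivative_add, derivative_sub, derivative_mul, derivative_C,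
      derivative_X, derivative_X_pow, eval_add, eval_sub, eval_mul, eval_pow, eval_C, eval_X,
      eval_one, eval_zero]
    push_cast
    ring
  have hQ0 : Q.eval 0 ∈ slitPlane := by
    simpa [Q] using ofReal_mem_slitPlane.2 (by linarith : (0 : ℝ) < 3/2 - θ)
  simpa [hF, hPQ, hB] using maclaurinSeries_eval_mul_cpow_ode P Q α hQ0

/-- recursive formula for the Maclaurin coefficients (convolution
weights) of the FBN-θ generating function
`ω^{(α)}(ξ) = (1+αθ−αθξ)·[(3/2−θ) − (2−2θ)ξ + (1/2−θ)ξ²]^{α}`. -/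
theorem fbn_theta_weights_recursion (α θ : ℝ) (hα : α ∈ Set.Ioc (0:ℝ) 1)
    (hθ : θ ∈ Set.Icc (-(1/(2*α))) 1)
    (ω : ℕ → ℝ)
    (hω : ∀ k : ℕ, (ω k : ℂ) =
      iteratedDeriv k
        (fun ξ : ℂ =>
          ((1 : ℂ) + (α : ℂ) * (θ : ℂ) - (α : ℂ) * (θ : ℂ) * ξ) *
            (((3/2 : ℂ) - (θ : ℂ)) - ((2 : ℂ) - 2 * (θ : ℂ)) * ξ
              + ((1/2 : ℂ) - (θ : ℂ)) * ξ ^ 2) ^ (α : ℂ)) 0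
        / (Nat.factorial k : ℂ))
    (φ0 φ1 φ2 ψ0 ψ1 ψ2 ψ3 : ℝ)
    (hφ0 : φ0 = 2*α*(θ - 1)*(α*θ + 1) + α*θ*(θ - 3/2))
    (hφ1 : φ1 = -α * (2*θ^2 - 3*α*θ + 4*α*θ^2 - 1))
    (hφ2 : φ2 = -(α*θ) * (1/2 - θ + α - 2*α*θ))
    (hψ0 : ψ0 = (1/2) * (3 - 2*θ) * (1 + α*θ))
    (hψ1 : ψ1 = -(α*θ/2) * (3 - 2*θ) - 2*(1 - θ)*(α*θ + 1))
    (hψ2 : ψ2 = -(1/2) * (α*θ + 1) * (2*θ - 1) - 2*α*θ*(θ - 1))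
    (hψ3 : ψ3 = -(1/2) * α * θ * (1 - 2*θ)) :
    ω 0 = 2 ^ (-α) * (1 + α*θ) * (3 - 2*θ) ^ α ∧
    ω 1 = φ0 * ω 0 / ψ0 ∧
    ω 2 = ((φ0 - ψ1) * ω 1 + φ1 * ω 0) / (2 * ψ0) ∧
    ∀ k : ℕ, 3 ≤ k →
      ω k = (1 / (k * ψ0)) *
        ((φ0 - ((k : ℝ) - 1) * ψ1) * ω (k - 1)
          + (φ1 - ((k : ℝ) - 2) * ψ2) * ω (k - 2)
          + (φ2 - ((k : ℝ) - 3) * ψ3) * ω (k - 3)) := by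
  have hS (k : ℕ) : PowerSeries.coeff k (maclaurinSeries (fbnGeneratingFunction α θ)) = ω k := by
    rw [coeff_maclaurinSeries, hω k]
    rfl
  obtain ⟨h1, h2, h3⟩ := PowerSeries.coeff_recurrence_of_cubic_ode
    (maclaurinSeries_fbnGeneratingFunction_ode (by linarith [hθ.2]) hφ0 hφ1 hφ2 hψ0 hψ1 hψ2 hψ3)
  simp only [hS] at h1 h2 h3
  norm_cast at h1 h2 h3
  have hψ0_pos : 0 < ψ0 := by
    have hαθ : α * -(1 / (2 * α)) ≤ α * θ := mul_le_mul_of_nonneg_left hθ.1 hα.1.le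
    have : α * -(1 / (2 * α)) = -(1/2) := by field_simp [hα.1.ne']
    rw [hψ0]
    nlinarith [hθ.2]
  refine ⟨?_, ?_, ?_, fun k hk => ?_⟩
  · rw [← ofReal_inj, ← hS, coeff_maclaurinSeries, iteratedDeriv_zero, factorial_zero, cast_one,
      div_one, fbnGeneratingFunction_zero (by linarith [hθ.2])]
  · field_simp
    linear_combination h1
  · field_simp
    linear_combination h2
  · obtain ⟨m, rfl⟩ := Nat.exists_eq_add_of_le' hk
    rw [show m + 3 - 1 = m + 2 by omega, show m + 3 - 2 = m + 1 by omega, Nat.add_sub_cancel]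
    have hm := h3 m
    push_cast at hm ⊢
    field_simp
    linear_combination hm
end

section
/- Let θ ∈ (−∞, 1/2), λ₁ = θ/(θ−1), λ₂ = (1−2θ)/(3−2θ), and define h_θ(x) = x/2 − π/2 + φ₂(x) − φ₁(x). Then for every x ∈ (0, π), h_θ is differentiable at x and h′_θ(x) = Λ_θ(cos x) / [2(λ₁² − 2λ₁ cos x + 1)(λ₂² − 2λ₂ cos x + 1)], where Λ_θ(t) = 4λ₁λ₂ t² − 4λ₂(1+λ₁λ₂) t + 3λ₂² − λ₁² + λ₁²λ₂² + 1. -/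
open Real

/-! Since |λᵢ| < 1, the denominator λᵢ cos x − 1 never vanishes, and the chain rule gives
φ′(x) = λ(λ − cos x) / (λ² − 2λ cos x + 1), the denominator being |1 − λ e^{ix}|² > 0.
Then h′ = 1/2 + φ₂′ − φ₁′, and over the common denominator the numerator is Λ_θ(cos x). -/

lemma abs_div_sub_one_lt_one {θ : ℝ} (hθ : θ < 1/2) : |θ / (θ - 1)| < 1 := by
  have hneg : θ - 1 < 0 := by linarith
  rw [abs_lt, lt_div_iff_of_neg hneg, div_lt_iff_of_neg hneg]
  constructor <;> linarith

lemma abs_one_sub_two_mul_div_lt_one {θ : ℝ} (hθ : θ < 1/2) :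
    |(1 - 2*θ) / (3 - 2*θ)| < 1 := by
  have hpos : 0 < 3 - 2*θ := by linarith
  rw [abs_lt, lt_div_iff₀ hpos, div_lt_iff₀ hpos]
  constructor <;> linarith

lemma mul_cos_lt_one {l : ℝ} (hl : |l| < 1) (x : ℝ) : l * cos x < 1 :=
  calc l * cos x ≤ |l * cos x| := le_abs_self _
    _ = |l| * |cos x| := abs_mul l (cos x)
    _ ≤ |l| := mul_le_of_le_one_right (abs_nonneg l) (abs_cos_le_one x)
    _ < 1 := hl

lemma sq_add_sq_eq_sq_sub_two_mul_cos_add_one (l x : ℝ) :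
    (l * cos x - 1)^2 + (l * sin x)^2 = l^2 - 2*l*cos x + 1 := by
  linear_combination l^2 * sin_sq_add_cos_sq x

lemma sq_sub_two_mul_cos_add_one_ne_zero {l x : ℝ} (hx : l * cos x ≠ 1) :
    l^2 - 2*l*cos x + 1 ≠ 0 := by
  have : l * cos x - 1 ≠ 0 := sub_ne_zero.mpr hx
  rw [← sq_add_sq_eq_sq_sub_two_mul_cos_add_one]
  positivity

lemma hasDerivAt_arctan_mul_sin_div {l x : ℝ} (hx : l * cos x ≠ 1) :
    HasDerivAt (fun y => arctan (l * sin y / (l * cos y - 1)))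
      (l * (l - cos x) / (l^2 - 2*l*cos x + 1)) x := by
  have hden : l * cos x - 1 ≠ 0 := sub_ne_zero.mpr hx
  have hD := sq_sub_two_mul_cos_add_one_ne_zero hx
  have hquot := ((hasDerivAt_sin x).const_mul l).div
    (((hasDerivAt_cos x).const_mul l).sub_const 1) hden
  have hone_add_sq : 1 + (l * sin x / (l * cos x - 1))^2
      = (l^2 - 2*l*cos x + 1) / (l * cos x - 1)^2 := by
    rw [← sq_add_sq_eq_sq_sub_two_mul_cos_add_one]
    field_simp
  have hnum : l * cos x * (l * cos x - 1) - l * sin x * (l * -sin x) = l * (l - cos x) := by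
    linear_combination l^2 * sin_sq_add_cos_sq x
  refine hquot.arctan.congr_deriv ?_
  rw [Pi.div_apply, hone_add_sq, hnum, one_div_div]
  field_simp

/-- derivative of `h_θ(x) = x/2 − π/2 + φ₂(x) − φ₁(x)` on `(0, π)`. -/
theorem h_theta_deriv (θ : ℝ) (hθ : θ < 1/2)
    (l1 l2 : ℝ) (hl1 : l1 = θ / (θ - 1)) (hl2 : l2 = (1 - 2*θ) / (3 - 2*θ))
    (φ1 φ2 h : ℝ → ℝ)
    (hφ1 : ∀ x, φ1 x = Real.arctan (l1 * Real.sin x / (l1 * Real.cos x - 1)))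
    (hφ2 : ∀ x, φ2 x = Real.arctan (l2 * Real.sin x / (l2 * Real.cos x - 1)))
    (hh : ∀ x, h x = x/2 - π/2 + φ2 x - φ1 x)
    (Λ : ℝ → ℝ)
    (hΛ : ∀ t, Λ t = 4*l1*l2*t^2 - 4*l2*(1 + l1*l2)*t + 3*l2^2 - l1^2 + l1^2*l2^2 + 1) :
    ∀ x ∈ Set.Ioo (0 : ℝ) π,
      HasDerivAt h
        (Λ (Real.cos x) /
          (2 * (l1^2 - 2*l1*Real.cos x + 1) * (l2^2 - 2*l2*Real.cos x + 1))) x := by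
  intro x _
  have hl1x : l1 * cos x ≠ 1 := (mul_cos_lt_one (hl1 ▸ abs_div_sub_one_lt_one hθ) x).ne
  have hl2x : l2 * cos x ≠ 1 := (mul_cos_lt_one (hl2 ▸ abs_one_sub_two_mul_div_lt_one hθ) x).ne
  obtain rfl := funext hφ1
  obtain rfl := funext hφ2
  obtain rfl := funext hh
  have hlin : HasDerivAt (fun y : ℝ => y/2 - π/2) (1/2) x :=
    ((hasDerivAt_id x).div_const 2).sub_const (π/2)
  refine ((hlin.add (hasDerivAt_arctan_mul_sin_div hl2x)).sub
    (hasDerivAt_arctan_mul_sin_div hl1x)).congr_deriv ?_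
  have hD1 := sq_sub_two_mul_cos_add_one_ne_zero hl1x
  have hD2 := sq_sub_two_mul_cos_add_one_ne_zero hl2x
  rw [hΛ, div_add_div _ _ two_ne_zero hD2, div_sub_div _ _ (mul_ne_zero two_ne_zero hD2) hD1,
    div_eq_div_iff (by simp [hD1, hD2]) (by simp [hD1, hD2])]
  ring
end

section
/- Let α ∈ (0,1] and θ ∈ (−1/(2α), 1], and set λ′₁ = αθ/(1+αθ) ∈ (−1,1) and λ′₂ = (1−2θ)/(3−2θ) ∈ [−1,1). For every x ∈ (0, π], the real part f_α(x) of the FBN-θ generating function evaluated at e^{ix} equals (3/2−θ)^α (1+αθ) (2 sin(x/2))^α (1+λ′₁² − 2λ′₁ cos x)^{1/2} (1+λ′₂² − 2λ′₂ cos x)^{α/2} · cos((α/2)(x−π) + φ₁(x) + αφ₂(x)), where φ₁(x) = arctan(λ′₁ sin x/(λ′₁ cos x − 1)) and φ₂(x) = arctan(λ′₂ sin x/(λ′₂ cos x − 1)). -/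
/-!
Factor the symbol as `(1 + αθ)(1 - λ'₁ξ) · ((3/2 - θ)(1 - ξ)(1 - λ'₂ξ))^α`. On the unit circle
every factor has an explicit polar form: `1 - e^{ix} = 2 sin(x/2) e^{i(x-π)/2}` and
`1 - λe^{ix} = |1 - λe^{ix}| e^{iφ}` with `φ = arctan(λ sin x / (λ cos x - 1))` as long as
`|λ| ≤ 1`. For `x ∈ (0, π]` the argument `(x - π)/2 + φ₂` of the base of the power lies in
`(-π, π)`, so the principal power acts on the polar form by `r e^{it} ↦ r^α e^{iαt}`, and the
value at `e^{-ix}` is the complex conjugate of the value at `e^{ix}`. Hence `f_α(x)` is the real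
part of the polar form of `ω^{(α)}(e^{ix})`.
-/

open Complex Real

open ComplexConjugate

theorem ofReal_add_mul_I_eq_sqrt_mul_exp_arctan {a : ℝ} (b : ℝ) (ha : 0 < a) :
    (a : ℂ) + b * I = (√(a ^ 2 + b ^ 2) : ℂ) * exp (Real.arctan (b / a) * I) := by
  set t := b / a
  have hb : b = a * t := by simp only [t]; field_simp
  have hsqrt : √(a ^ 2 + b ^ 2) = a * √(1 + t ^ 2) := by
    rw [hb, show a ^ 2 + (a * t) ^ 2 = a ^ 2 * (1 + t ^ 2) by ring,
      Real.sqrt_mul (sq_nonneg a), Real.sqrt_sq ha.le]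
  have hne : (√(1 + t ^ 2) : ℂ) ≠ 0 := ofReal_ne_zero.mpr (by positivity)
  rw [hsqrt, exp_mul_I, ← ofReal_cos, ← ofReal_sin, Real.cos_arctan, Real.sin_arctan, hb]
  push_cast
  field_simp

theorem one_sub_ofReal_mul_exp_mul_I {l : ℝ} (hl : |l| ≤ 1) (x : ℝ) :
    1 - l * exp (x * I) = (√(1 + l ^ 2 - 2 * l * Real.cos x) : ℂ) *
      exp (Real.arctan (l * Real.sin x / (l * Real.cos x - 1)) * I) := by
  have hsq : 1 + l ^ 2 - 2 * l * Real.cos x =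
      (1 - l * Real.cos x) ^ 2 + (-(l * Real.sin x)) ^ 2 := by
    linear_combination (-l ^ 2) * Real.sin_sq_add_cos_sq x
  have harg : l * Real.sin x / (l * Real.cos x - 1) =
      -(l * Real.sin x) / (1 - l * Real.cos x) := by
    rw [← neg_div_neg_eq, neg_sub]
  have hlhs : 1 - l * exp (x * I) =
      ((1 - l * Real.cos x : ℝ) : ℂ) + (-(l * Real.sin x) : ℝ) * I := by
    rw [exp_mul_I, ← ofReal_cos, ← ofReal_sin]; push_cast; ring
  have hcos : l * Real.cos x ≤ 1 :=
    (le_abs_self _).trans (by rw [abs_mul]; nlinarith [abs_nonneg l, Real.abs_cos_le_one x])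
  rw [hsq, harg, hlhs]
  rcases hcos.lt_or_eq with hlt | heq
  · exact ofReal_add_mul_I_eq_sqrt_mul_exp_arctan _ (sub_pos.mpr hlt)
  · -- `l cos x = 1` with `|l| ≤ 1` forces `l sin x = 0`, so both sides vanish
    have hsin : l * Real.sin x = 0 := by
      have : |l| * |Real.cos x| = 1 := by rw [← abs_mul, heq, abs_one]
      nlinarith [abs_nonneg l, Real.abs_cos_le_one x, sq_abs l, sq_abs (Real.cos x),
        Real.sin_sq_add_cos_sq x, sq_nonneg (l * Real.sin x)]
    simp [heq, hsin]

theorem one_sub_exp_mul_I (x : ℝ) :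
    1 - exp (x * I) = ((2 * Real.sin (x / 2) : ℝ) : ℂ) * exp (((x - π) / 2 : ℝ) * I) := by
  have hcos : Real.cos x = 1 - 2 * Real.sin (x / 2) ^ 2 := by
    have h := Real.cos_two_mul (x / 2)
    rw [mul_div_cancel₀ _ two_ne_zero] at h
    linear_combination h + 2 * Real.sin_sq_add_cos_sq (x / 2)
  have hsin : Real.sin x = 2 * Real.sin (x / 2) * Real.cos (x / 2) := by
    rw [← Real.sin_two_mul, mul_div_cancel₀ _ two_ne_zero]
  rw [exp_mul_I, exp_mul_I, ← ofReal_cos, ← ofReal_sin, ← ofReal_cos, ← ofReal_sin,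
    show (x - π) / 2 = x / 2 - π / 2 by ring, Real.cos_sub_pi_div_two, Real.sin_sub_pi_div_two,
    hcos, hsin]
  push_cast
  ring

theorem ofReal_mul_exp_mul_I_cpow {r t : ℝ} (hr : 0 ≤ r) (ht : t ∈ Set.Ioc (-π) π) (a : ℝ) :
    ((r : ℂ) * exp (t * I)) ^ (a : ℂ) = ((r ^ a : ℝ) : ℂ) * exp ((a * t : ℝ) * I) := by
  rcases hr.eq_or_lt with rfl | hr
  · rcases eq_or_ne a 0 with rfl | ha <;> simp [*]
  · have hz : (r : ℂ) * exp (t * I) = exp (Real.log r + t * I) := by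
      rw [Complex.exp_add, ← ofReal_exp, Real.exp_log hr]
    rw [hz, cpow_def_of_ne_zero (exp_ne_zero _),
      log_exp (by simpa using ht.1) (by simpa using ht.2), Real.rpow_def_of_pos hr, ofReal_exp,
      ← Complex.exp_add]
    congr 1
    push_cast
    ring

theorem arg_ofReal_mul_exp_mul_I_ne_pi {r t : ℝ} (hr : 0 ≤ r) (ht : t ∈ Set.Ioo (-π) π) :
    arg (r * exp (t * I)) ≠ π := by
  rcases hr.eq_or_lt with rfl | hr
  · simpa using Real.pi_ne_zero.symm
  · rw [exp_mul_I, arg_mul_cos_add_sin_mul_I hr ⟨ht.1, ht.2.le⟩]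
    exact ht.2.ne

theorem ofReal_mul_exp_mul_I_mul (r s t u : ℝ) :
    (r * exp (t * I)) * (s * exp (u * I)) = ((r * s : ℝ) : ℂ) * exp ((t + u : ℝ) * I) := by
  push_cast [add_mul, Complex.exp_add]
  ring

theorem sin_half_nonneg {x : ℝ} (h₀ : 0 ≤ x) (h₁ : x ≤ 2 * π) : 0 ≤ Real.sin (x / 2) :=
  Real.sin_nonneg_of_nonneg_of_le_pi (by linarith) (by linarith)

theorem sub_pi_div_two_add_arctan_mem_Ioo {x : ℝ} (hx : x ∈ Set.Ioc 0 π) (y : ℝ) :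
    (x - π) / 2 + Real.arctan y ∈ Set.Ioo (-π) π := by
  have := Real.neg_pi_div_two_lt_arctan y
  have := Real.arctan_lt_pi_div_two y
  constructor <;> linarith [hx.1, hx.2]

noncomputable def factoredSymbol (c₁ c₂ l₁ l₂ a : ℝ) (ξ : ℂ) : ℂ :=
  c₁ * (1 - l₁ * ξ) * (c₂ * ((1 - ξ) * (1 - l₂ * ξ))) ^ (a : ℂ)

theorem fbn_symbol_eq_factoredSymbol {α θ l₁ l₂ : ℝ} (h₁ : (1 + α * θ) * l₁ = α * θ)
    (h₂ : (3 / 2 - θ) * l₂ = 1 / 2 - θ) (ξ : ℂ) :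
    ((1 : ℂ) + α * θ - α * θ * ξ) *
        ((3 / 2 - θ) - (2 - 2 * θ) * ξ + (1 / 2 - θ) * ξ ^ 2) ^ (α : ℂ) =
      factoredSymbol (1 + α * θ) (3 / 2 - θ) l₁ l₂ α ξ := by
  have h₁' : (1 + α * θ : ℂ) * l₁ = α * θ := by exact_mod_cast h₁
  have h₂' : ((3 / 2 - θ : ℝ) : ℂ) * l₂ = ((1 / 2 - θ : ℝ) : ℂ) := by rw [← ofReal_mul, h₂]
  unfold factoredSymbol
  push_cast at h₂' ⊢
  congr 1
  · linear_combination ξ * h₁'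
  · congr 1
    linear_combination (ξ - ξ ^ 2) * h₂'

section FactoredSymbol

variable {c₁ c₂ l₁ l₂ : ℝ}

theorem factoredSymbol_base_exp_mul_I (hl₂ : |l₂| ≤ 1) (x : ℝ) :
    (c₂ : ℂ) * ((1 - exp (x * I)) * (1 - l₂ * exp (x * I))) =
      ((c₂ * (2 * Real.sin (x / 2) * √(1 + l₂ ^ 2 - 2 * l₂ * Real.cos x)) : ℝ) : ℂ) *
        exp (((x - π) / 2 + Real.arctan (l₂ * Real.sin x / (l₂ * Real.cos x - 1)) : ℝ) * I) := by
  rw [one_sub_exp_mul_I, one_sub_ofReal_mul_exp_mul_I hl₂]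
  push_cast [add_mul, Complex.exp_add]
  ring

theorem factoredSymbol_exp_mul_I (a : ℝ) (hc₂ : 0 ≤ c₂) (hl₁ : |l₁| ≤ 1)
    (hl₂ : |l₂| ≤ 1) {x : ℝ} (hx : x ∈ Set.Ioc 0 π) :
    factoredSymbol c₁ c₂ l₁ l₂ a (exp (x * I)) =
      ((c₂ ^ a * c₁ * (2 * Real.sin (x / 2)) ^ a *
          (1 + l₁ ^ 2 - 2 * l₁ * Real.cos x) ^ ((1 : ℝ) / 2) *
          (1 + l₂ ^ 2 - 2 * l₂ * Real.cos x) ^ (a / 2) : ℝ) : ℂ) *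
        exp ((a / 2 * (x - π) + Real.arctan (l₁ * Real.sin x / (l₁ * Real.cos x - 1)) +
          a * Real.arctan (l₂ * Real.sin x / (l₂ * Real.cos x - 1)) : ℝ) * I) := by
  have hsin : 0 ≤ Real.sin (x / 2) := sin_half_nonneg hx.1.le (by linarith [hx.2, Real.pi_pos])
  have hA₂ : 0 ≤ 1 + l₂ ^ 2 - 2 * l₂ * Real.cos x := by
    nlinarith [Real.sin_sq_add_cos_sq x, sq_nonneg (l₂ * Real.sin x),
      sq_nonneg (1 - l₂ * Real.cos x)]
  have hmod : c₁ * √(1 + l₁ ^ 2 - 2 * l₁ * Real.cos x) *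
      (c₂ * (2 * Real.sin (x / 2) * √(1 + l₂ ^ 2 - 2 * l₂ * Real.cos x))) ^ a =
      c₂ ^ a * c₁ * (2 * Real.sin (x / 2)) ^ a *
        (1 + l₁ ^ 2 - 2 * l₁ * Real.cos x) ^ ((1 : ℝ) / 2) *
        (1 + l₂ ^ 2 - 2 * l₂ * Real.cos x) ^ (a / 2) := by
    rw [Real.mul_rpow hc₂ (by positivity),
      Real.mul_rpow (mul_nonneg zero_le_two hsin) (Real.sqrt_nonneg _),
      Real.sqrt_eq_rpow, Real.sqrt_eq_rpow, ← Real.rpow_mul hA₂, one_div_mul_eq_div]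
    ring
  unfold factoredSymbol
  rw [factoredSymbol_base_exp_mul_I hl₂, ofReal_mul_exp_mul_I_cpow (by positivity)
      (Set.Ioo_subset_Ioc_self (sub_pi_div_two_add_arctan_mem_Ioo hx _)),
    one_sub_ofReal_mul_exp_mul_I hl₁, ← mul_assoc (c₁ : ℂ), ← ofReal_mul,
    ofReal_mul_exp_mul_I_mul, hmod]
  congr 4
  ring

theorem factoredSymbol_conj {a : ℝ} {ξ : ℂ}
    (h : arg (c₂ * ((1 - ξ) * (1 - l₂ * ξ))) ≠ π) :
    factoredSymbol c₁ c₂ l₁ l₂ a (conj ξ) = conj (factoredSymbol c₁ c₂ l₁ l₂ a ξ) := by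
  unfold factoredSymbol
  rw [map_mul, map_mul, ← conj_ofReal a, ← conj_cpow _ _ h]
  simp [conj_ofReal]

theorem factoredSymbol_exp_neg_mul_I (a : ℝ) (hc₂ : 0 ≤ c₂) (hl₂ : |l₂| ≤ 1)
    {x : ℝ} (hx : x ∈ Set.Ioc 0 π) :
    factoredSymbol c₁ c₂ l₁ l₂ a (exp (-(x * I))) =
      conj (factoredSymbol c₁ c₂ l₁ l₂ a (exp (x * I))) := by
  have hconj : exp (-(x * I)) = conj (exp (x * I)) := by
    rw [← exp_conj, map_mul, conj_ofReal, conj_I, mul_neg]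
  have hsin : 0 ≤ Real.sin (x / 2) := sin_half_nonneg hx.1.le (by linarith [hx.2, Real.pi_pos])
  have harg : arg (c₂ * ((1 - exp (x * I)) * (1 - l₂ * exp (x * I)))) ≠ π := by
    rw [factoredSymbol_base_exp_mul_I hl₂]
    exact arg_ofReal_mul_exp_mul_I_ne_pi (by positivity) (sub_pi_div_two_add_arctan_mem_Ioo hx _)
  rw [hconj, factoredSymbol_conj harg]

end FactoredSymbol

theorem neg_half_lt_mul_of_neg_inv_two_mul_lt {α θ : ℝ} (hα : 0 < α)
    (hθ : -(1 / (2 * α)) < θ) :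
    -(1 / 2) < α * θ := by
  have h : α * (1 / (2 * α)) = 1 / 2 := by field_simp
  linarith [mul_lt_mul_of_pos_left hθ hα]

theorem div_one_add_mem_Ioo {t : ℝ} (ht : -(1 / 2) < t) : t / (1 + t) ∈ Set.Ioo (-1) 1 := by
  have h : 0 < 1 + t := by linarith
  constructor
  · rw [lt_div_iff₀ h]; linarith
  · rw [div_lt_one h]; linarith

theorem one_sub_two_mul_div_three_sub_two_mul_mem_Ico {θ : ℝ} (hθ : θ ≤ 1) :
    (1 - 2 * θ) / (3 - 2 * θ) ∈ Set.Ico (-1) 1 := by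
  have h : 0 < 3 - 2 * θ := by linarith
  constructor
  · rw [le_div_iff₀ h]; linarith
  · rw [div_lt_one h]; linarith

/-- polar form of the real part
`f_α(x) = (1/2)[ω^{(α)}(e^{ix}) + ω^{(α)}(e^{−ix})]` of the FBN-θ generating
function on the unit circle, for `x ∈ (0, π]`. -/
theorem fbn_theta_symbol_polar_form (α θ : ℝ) (hα : α ∈ Set.Ioc (0:ℝ) 1)
    (hθ : θ ∈ Set.Ioc (-(1/(2*α))) 1)
    (l1 l2 : ℝ) (hl1 : l1 = α*θ / (1 + α*θ)) (hl2 : l2 = (1 - 2*θ) / (3 - 2*θ))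
    (ω : ℂ → ℂ)
    (hω : ∀ ξ : ℂ, ω ξ =
      ((1 : ℂ) + (α : ℂ) * (θ : ℂ) - (α : ℂ) * (θ : ℂ) * ξ) *
        (((3/2 : ℂ) - (θ : ℂ)) - ((2 : ℂ) - 2 * (θ : ℂ)) * ξ
          + ((1/2 : ℂ) - (θ : ℂ)) * ξ ^ 2) ^ (α : ℂ))
    (φ1 φ2 : ℝ → ℝ)
    (hφ1 : ∀ x, φ1 x = Real.arctan (l1 * Real.sin x / (l1 * Real.cos x - 1)))
    (hφ2 : ∀ x, φ2 x = Real.arctan (l2 * Real.sin x / (l2 * Real.cos x - 1))) :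
    l1 ∈ Set.Ioo (-1 : ℝ) 1 ∧ l2 ∈ Set.Ico (-1 : ℝ) 1 ∧
    ∀ x ∈ Set.Ioc (0 : ℝ) π,
      (1/2 : ℂ) * (ω (Complex.exp (Complex.I * x)) + ω (Complex.exp (-(Complex.I * x)))) =
        (((3/2 - θ) ^ α * (1 + α*θ) * (2 * Real.sin (x/2)) ^ α *
          (1 + l1^2 - 2*l1*Real.cos x) ^ ((1:ℝ)/2) *
          (1 + l2^2 - 2*l2*Real.cos x) ^ (α/2) *
          Real.cos ((α/2) * (x - π) + φ1 x + α * φ2 x) : ℝ) : ℂ) := by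
  obtain ⟨hθ₀, hθ₁⟩ := hθ
  have hαθ := neg_half_lt_mul_of_neg_inv_two_mul_lt hα.1 hθ₀
  have hl1m : l1 ∈ Set.Ioo (-1 : ℝ) 1 := hl1 ▸ div_one_add_mem_Ioo hαθ
  have hl2m : l2 ∈ Set.Ico (-1 : ℝ) 1 :=
    hl2 ▸ one_sub_two_mul_div_three_sub_two_mul_mem_Ico hθ₁
  refine ⟨hl1m, hl2m, fun x hx => ?_⟩
  have hc₂ : 0 ≤ 3 / 2 - θ := by linarith
  have habs₁ : |l1| ≤ 1 := abs_le.mpr ⟨hl1m.1.le, hl1m.2.le⟩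
  have habs₂ : |l2| ≤ 1 := abs_le.mpr ⟨hl2m.1, hl2m.2.le⟩
  have hfac (ξ : ℂ) : ω ξ = factoredSymbol (1 + α * θ) (3 / 2 - θ) l1 l2 α ξ :=
    (hω ξ).trans <| fbn_symbol_eq_factoredSymbol
      (by rw [hl1]; field_simp [show 1 + α * θ ≠ 0 by linarith])
      (by rw [hl2]; field_simp [show 3 - 2 * θ ≠ 0 by linarith]) ξ
  rw [hfac, hfac, mul_comm I, factoredSymbol_exp_neg_mul_I α hc₂ habs₂ hx, one_div_mul_eq_div,
    ← re_eq_add_conj, factoredSymbol_exp_mul_I α hc₂ habs₁ habs₂ hx, re_ofReal_mul,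
    exp_ofReal_mul_I_re, hφ1, hφ2]
end
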